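/- arXiv:1212.1230 — 2 statements merged into one kernel-verified Lean document; each statement's English description precedes it below -/
import Mathlib

section
/- Let a countable group G act by measurable, measure-preserving transformations on a probability space (X,μ) such that for every g ∈ G the set Fix(g) = {x ∈ X : g·x = x} is measurable. Then the function χ: G → ℂ defined by χ(g) = μ(Fix(g)) is a character of G; that is, χ(e) = 1, χ(gh) = χ(hg) for all g,h ∈ G, and for every m and all g₁,…,g_m ∈ G the matrix (χ(g_i g_j⁻¹))_{i,j} is positive semidefinite. -/
open scoped ComplexOrder

/-- A character of a group `G`: a normalized positive-definite class function. -/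
def IsCharacter {G : Type*} [Group G] (χ : G → ℂ) : Prop :=
  χ 1 = 1 ∧
  (∀ g h : G, χ (g * h) = χ (h * g)) ∧
  ∀ (m : ℕ) (g : Fin m → G),
    Matrix.PosSemidef (Matrix.of fun a b : Fin m => χ (g a * (g b)⁻¹))

/-- An indecomposable character: one which is not a proper convex combination of
two distinct characters. -/
def IsIndecomposableCharacter {G : Type*} [Group G] (χ : G → ℂ) : Prop :=
  IsCharacter χ ∧
  ¬∃ (α : ℝ) (χ₁ χ₂ : G → ℂ), 0 < α ∧ α < 1 ∧
      IsCharacter χ₁ ∧ IsCharacter χ₂ ∧ χ₁ ≠ χ₂ ∧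
      χ = fun g => (α : ℂ) * χ₁ g + (1 - (α : ℂ)) * χ₂ g

/-- The regular character: `χ(e) = 1` and `χ(g) = 0` for `g ≠ e`. -/
def IsRegularCharacter {G : Type*} [Group G] (χ : G → ℂ) : Prop :=
  χ 1 = 1 ∧ ∀ g : G, g ≠ 1 → χ g = 0

/-- The identity character: `χ(g) = 1` for all `g`. -/
def IsIdentityCharacter {G : Type*} [Group G] (χ : G → ℂ) : Prop :=
  ∀ g : G, χ g = 1

open MeasureTheory

/-!
Writing `y_a(x) = g_a⁻¹ • x`, the point `x` is fixed by `g_a g_b⁻¹` iff `y_a(x) = y_b(x)`, so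
`μ(Fix(g_a g_b⁻¹)) = ∫ [y_a(x) = y_b(x)] dμ(x)`. For each `x` the matrix `[y_a(x) = y_b(x)]` is
the Gram matrix of the basis vectors `e_{y_a(x)}` of `ℓ²(X)`, hence positive semidefinite, and
positive semidefiniteness survives integration. The class-function property comes from
`g⁻¹ • Fix(g h) = Fix(h g)` and invariance of `μ`.
-/

open MulAction Matrix

theorem Matrix.posSemidef_ite_eq {n α 𝕜 : Type*} [RCLike 𝕜] [Finite n] [DecidableEq α]
    (y : n → α) : (of fun i j => if y i = y j then (1 : 𝕜) else 0).PosSemidef := by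
  convert posSemidef_gram 𝕜 fun i => lp.single (E := fun _ : α => 𝕜) 2 (y i) 1 using 1
  ext i j
  simp [lp.inner_single_left, lp.single_apply, Pi.single_apply]

theorem Matrix.posSemidef_integral {X n 𝕜 : Type*} [RCLike 𝕜] [MeasurableSpace X]
    {μ : Measure X} [Fintype n] {M : X → Matrix n n 𝕜} (hint : ∀ i j, Integrable (fun x => M x i j) μ)
    (hM : ∀ᵐ x ∂μ, (M x).PosSemidef) : (of fun i j => ∫ x, M x i j ∂μ).PosSemidef := by
  refine .of_dotProduct_mulVec_nonneg ?_ fun v => ?_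
  · ext i j
    simp only [conjTranspose_apply, of_apply, RCLike.star_def, ← integral_conj]
    refine integral_congr_ae (hM.mono fun x hx => ?_)
    simpa using congr_fun₂ hx.isHermitian i j
  · have hquad : star v ⬝ᵥ (of fun i j => ∫ x, M x i j ∂μ) *ᵥ v
        = ∫ x, star v ⬝ᵥ M x *ᵥ v ∂μ := by
      have hterm : ∀ i j, Integrable (fun x => star (v i) * M x i j * v j) μ :=
        fun i j => ((hint i j).const_mul _).mul_const _
      calc star v ⬝ᵥ (of fun i j => ∫ x, M x i j ∂μ) *ᵥ v
          = ∑ i, ∑ j, ∫ x, star (v i) * M x i j * v j ∂μ := by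
            simp [dotProduct, mulVec, Finset.mul_sum, mul_assoc, integral_mul_const,
              integral_const_mul]
        _ = ∫ x, ∑ i, ∑ j, star (v i) * M x i j * v j ∂μ := by
            rw [integral_finsetSum _ fun i _ => integrable_finsetSum _ fun j _ => hterm i j]
            simp only [integral_finsetSum _ fun j _ => hterm _ j]
        _ = ∫ x, star v ⬝ᵥ M x *ᵥ v ∂μ := by
            simp [dotProduct, mulVec, Finset.mul_sum, mul_assoc]
    rw [hquad]
    exact integral_nonneg_of_ae (hM.mono fun x hx => hx.dotProduct_mulVec_nonneg v)

theorem MulAction.fixedBy_mul_inv {G X : Type*} [Group G] [MulAction G X] (g h : G) :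
    fixedBy X (g * h⁻¹) = {x | g⁻¹ • x = h⁻¹ • x} := by
  ext x
  rw [mem_fixedBy, mul_smul]
  exact (smul_eq_iff_eq_inv_smul g).trans eq_comm

theorem MulAction.preimage_smul_fixedBy_mul {G X : Type*} [Group G] [MulAction G X] (g h : G) :
    (g • ·) ⁻¹' fixedBy X (g * h) = fixedBy X (h * g) := by
  rw [Set.preimage_smul, smul_fixedBy]
  group

theorem statement15_general {G X : Type*} [Group G] [MeasurableSpace X]
    (μ : Measure X) [IsProbabilityMeasure μ] [MulAction G X]
    (hpres : ∀ (g : G) (A : Set X), MeasurableSet A →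
      μ ((fun x : X => g • x) ⁻¹' A) = μ A)
    (hfix : ∀ g : G, MeasurableSet {x : X | g • x = x}) :
    IsCharacter fun g : G => ((μ {x : X | g • x = x}).toReal : ℂ) := by
  classical
  have hfix' : ∀ g : G, MeasurableSet (fixedBy X g) := hfix
  change IsCharacter fun g : G => ((μ.real (fixedBy X g) : ℝ) : ℂ)
  refine ⟨by simp, fun g h => ?_, fun m g => ?_⟩
  · simp only [measureReal_def, ← preimage_smul_fixedBy_mul g h, hpres g _ (hfix' _)]
  · set M : X → Matrix (Fin m) (Fin m) ℂ :=
      fun x => of fun a b => if (g a)⁻¹ • x = (g b)⁻¹ • x then 1 else 0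
    have hM : ∀ a b, (fun x => M x a b) = (fixedBy X (g a * (g b)⁻¹)).indicator fun _ => 1 := by
      intro a b
      ext x
      simp [M, Set.indicator_apply, fixedBy_mul_inv]
    have hentries : (of fun a b => (μ.real (fixedBy X (g a * (g b)⁻¹)) : ℂ))
        = of fun a b => ∫ x, M x a b ∂μ := by
      ext a b
      rw [of_apply, of_apply, hM a b, integral_indicator_const _ (hfix' _)]
      simp
    rw [hentries]
    exact posSemidef_integral (fun a b => hM a b ▸ (integrable_const 1).indicator (hfix' _))
      (ae_of_all _ fun x => posSemidef_ite_eq _)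

/-- Statement 15: if a countable group `G` acts by measurable measure-preserving
transformations on a probability space `(X,μ)` with all fixed-point sets
measurable, then `g ↦ μ(Fix(g))` is a character of `G`. -/
theorem statement15 {G X : Type*} [Group G] [Countable G] [MeasurableSpace X]
    (μ : Measure X) [IsProbabilityMeasure μ] [MulAction G X]
    (hmeas : ∀ g : G, Measurable fun x : X => g • x)
    (hpres : ∀ (g : G) (A : Set X), MeasurableSet A →
      μ ((fun x : X => g • x) ⁻¹' A) = μ A)
    (hfix : ∀ g : G, MeasurableSet {x : X | g • x = x}) :
    IsCharacter fun g : G => ((μ {x : X | g • x = x}).toReal : ℂ) :=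
  statement15_general μ hpres hfix
end

section
/- Let G be a countable group acting by homeomorphisms on an infinite Polish regular Hausdorff topological space X, and suppose the action is compressible. Then there is no G-invariant Borel probability measure on X. -/
/-- The support of a group element acting on a topological space:
the closure of the set of non-fixed points. -/
def gsupp {G X : Type*} [Group G] [TopologicalSpace X] [MulAction G X] (g : G) : Set X :=
  closure {x : X | g • x ≠ x}

/-- A base `𝔘` of the topology of `X` witnessing that the action of `G` on `X`
is compressible: (i) every support is contained in some element of `𝔘`;
(ii) any `U₁ ∈ 𝔘` can be moved by the group inside any `U₂ ∈ 𝔘`;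
(iii) if `U₁, U₂ ∈ 𝔘` have disjoint closures then `U₁` can be moved off any
`U₃ ∈ 𝔘` by an element whose support misses `U₂`;
(iv) `𝔘` is directed upwards under unions. -/
def IsCompressibleBase (G : Type*) {X : Type*} [Group G] [TopologicalSpace X]
    [MulAction G X] (𝔘 : Set (Set X)) : Prop :=
  TopologicalSpace.IsTopologicalBasis 𝔘 ∧
  (∀ g : G, ∃ U ∈ 𝔘, gsupp g ⊆ U) ∧
  (∀ U₁ ∈ 𝔘, ∀ U₂ ∈ 𝔘, ∃ g : G, (fun x : X => g • x) '' U₁ ⊆ U₂) ∧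
  (∀ U₁ ∈ 𝔘, ∀ U₂ ∈ 𝔘, ∀ U₃ ∈ 𝔘, closure U₁ ∩ closure U₂ = ∅ →
    ∃ g : G, ((fun x : X => g • x) '' U₁) ∩ U₃ = ∅ ∧ gsupp g ∩ U₂ = ∅) ∧
  (∀ U₁ ∈ 𝔘, ∀ U₂ ∈ 𝔘, ∃ U₃ ∈ 𝔘, U₁ ∪ U₂ ⊆ U₃)

/-- The action of `G` on `X` is compressible if some base of the topology
witnesses it. -/
def IsCompressibleAction (G X : Type*) [Group G] [TopologicalSpace X] [MulAction G X] : Prop :=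
  ∃ 𝔘 : Set (Set X), IsCompressibleBase G 𝔘

open MeasureTheory

/-!
All members of a compressible base have the same measure under an invariant measure, since each
one can be moved into any other. As the base is directed under unions and the space is second countable,
continuity from below shows that this common value is the measure of the whole space. Two disjoint
members then force `μ univ + μ univ ≤ μ univ`, so a finite invariant measure vanishes.
-/

open Set TopologicalSpace
open scoped Pointwise ENNReal

theorem exists_mem_accumulate_subset_of_directedOn {X : Type*} {𝒰 : Set (Set X)}
    (hdir : DirectedOn (· ⊆ ·) 𝒰) {f : ℕ → Set X} (hf : ∀ n, f n ∈ 𝒰) (n : ℕ) :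
    ∃ U ∈ 𝒰, accumulate f n ⊆ U := by
  induction n with
  | zero => exact ⟨f 0, hf 0, (accumulate_zero_nat f).subset⟩
  | succ n ih =>
    obtain ⟨V, hV, hfV⟩ := ih
    obtain ⟨W, hW, hVW, hfW⟩ := hdir V hV (f (n + 1)) (hf (n + 1))
    exact ⟨W, hW, (accumulate_succ f n).subset.trans (union_subset (hfV.trans hVW) hfW)⟩

theorem measure_univ_le_of_directedOn_isOpen_cover {X : Type*} [TopologicalSpace X]
    [SecondCountableTopology X] [MeasurableSpace X] (μ : Measure X) {𝒰 : Set (Set X)}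
    (hopen : ∀ U ∈ 𝒰, IsOpen U) (hcover : ⋃₀ 𝒰 = univ) (hdir : DirectedOn (· ⊆ ·) 𝒰)
    {c : ℝ≥0∞} (hc : ∀ U ∈ 𝒰, μ U ≤ c) : μ univ ≤ c := by
  obtain ⟨T, hTc, hT𝒰, hT⟩ := isOpen_sUnion_countable 𝒰 hopen
  rw [hcover] at hT
  rcases T.eq_empty_or_nonempty with rfl | hTne
  · simp [← hT]
  obtain ⟨f, rfl⟩ := hTc.exists_eq_range hTne
  rw [← hT, sUnion_range, measure_iUnion_eq_iSup_accumulate]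
  refine iSup_le fun n => ?_
  obtain ⟨U, hU, hfU⟩ :=
    exists_mem_accumulate_subset_of_directedOn hdir (fun n => hT𝒰 (mem_range_self n)) n
  exact (measure_mono hfU).trans (hc U hU)

theorem TopologicalSpace.IsTopologicalBasis.exists_disjoint_nonempty_pair {X : Type*}
    [TopologicalSpace X] [T2Space X] [Nontrivial X] {𝔘 : Set (Set X)} (hB : IsTopologicalBasis 𝔘) :
    ∃ U ∈ 𝔘, ∃ V ∈ 𝔘, U.Nonempty ∧ V.Nonempty ∧ Disjoint U V := by
  obtain ⟨x, y, hxy⟩ := exists_pair_ne X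
  obtain ⟨u, v, hu, hv, hxu, hyv, huv⟩ := t2_separation hxy
  obtain ⟨U, hU, hxU, hUu⟩ := hB.exists_subset_of_mem_open hxu hu
  obtain ⟨V, hV, hyV, hVv⟩ := hB.exists_subset_of_mem_open hyv hv
  exact ⟨U, hU, V, hV, ⟨x, hxU⟩, ⟨y, hyV⟩, huv.mono hUu hVv⟩

namespace IsCompressibleBase

variable {G X : Type*} [Group G] [TopologicalSpace X] [MulAction G X] [MeasurableSpace X]
  {𝔘 : Set (Set X)} {μ : Measure X} [SMulInvariantMeasure G X μ]

theorem measure_le (hB : IsCompressibleBase G 𝔘) {U₁ U₂ : Set X} (h₁ : U₁ ∈ 𝔘) (h₂ : U₂ ∈ 𝔘) :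
    μ U₁ ≤ μ U₂ := by
  obtain ⟨g, hg⟩ := hB.2.2.1 U₁ h₁ U₂ h₂
  calc μ U₁ = μ (g • U₁) := (measure_smul μ g U₁).symm
    _ ≤ μ U₂ := measure_mono hg

theorem measure_univ_le [SecondCountableTopology X] (hB : IsCompressibleBase G 𝔘) {U : Set X}
    (hU : U ∈ 𝔘) : μ univ ≤ μ U :=
  measure_univ_le_of_directedOn_isOpen_cover μ (fun _ hV => hB.1.isOpen hV) hB.1.sUnion_eq
    (fun U₁ h₁ U₂ h₂ => by
      obtain ⟨U₃, h₃, hsub⟩ := hB.2.2.2.2 U₁ h₁ U₂ h₂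
      exact ⟨U₃, h₃, union_subset_iff.mp hsub⟩)
    (fun _ hV => hB.measure_le hV hU)

theorem eq_zero_of_isFiniteMeasure [SecondCountableTopology X] [T2Space X] [Nontrivial X]
    [BorelSpace X] [IsFiniteMeasure μ] (hB : IsCompressibleBase G 𝔘) : μ = 0 := by
  obtain ⟨U, hU, V, hV, -, -, hUV⟩ := hB.1.exists_disjoint_nonempty_pair
  have hdouble : μ univ + μ univ ≤ μ univ + 0 :=
    calc μ univ + μ univ ≤ μ U + μ V := add_le_add (hB.measure_univ_le hU) (hB.measure_univ_le hV)
      _ = μ (U ∪ V) := (measure_union hUV (hB.1.isOpen hV).measurableSet).symm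
      _ ≤ μ univ := measure_mono (subset_univ _)
      _ = μ univ + 0 := (add_zero _).symm
  exact Measure.measure_univ_eq_zero.mp
    (nonpos_iff_eq_zero.mp (ENNReal.le_of_add_le_add_left (measure_ne_top μ univ) hdouble))

end IsCompressibleBase

theorem statement19_general {G X : Type*} [Group G]
    [TopologicalSpace X] [PolishSpace X] [Infinite X]
    [MeasurableSpace X] [BorelSpace X]
    [MulAction G X]
    (hcomp : IsCompressibleAction G X) :
    ¬∃ μ : Measure X, IsProbabilityMeasure μ ∧
      ∀ (g : G) (A : Set X), MeasurableSet A →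
        μ ((fun x : X => g • x) ⁻¹' A) = μ A := by
  rintro ⟨μ, hμ, hinv⟩
  obtain ⟨𝔘, hB⟩ := hcomp
  have : SMulInvariantMeasure G X μ := ⟨hinv⟩
  exact IsProbabilityMeasure.ne_zero μ hB.eq_zero_of_isFiniteMeasure

/-- Statement 19: a compressible action of a countable group by homeomorphisms
on an infinite Polish regular Hausdorff space admits no invariant Borel
probability measure. -/
theorem statement19 {G X : Type*} [Group G] [Countable G]
    [TopologicalSpace X] [PolishSpace X] [T2Space X] [RegularSpace X] [Infinite X]
    [MeasurableSpace X] [BorelSpace X]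
    [MulAction G X] (hcont : ∀ g : G, Continuous fun x : X => g • x)
    (hcomp : IsCompressibleAction G X) :
    ¬∃ μ : Measure X, IsProbabilityMeasure μ ∧
      ∀ (g : G) (A : Set X), MeasurableSet A →
        μ ((fun x : X => g • x) ⁻¹' A) = μ A :=
  statement19_general hcomp
end
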